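/- Let B = {132}. Then: (i) for every gap vector (g₁,g₂,g₃) ∈ ℕ³ with g₂ > 0, Z(B;12;(g₁,g₂,g₃)) = ∅; and (ii) for all g₁,g₃ ∈ ℕ, |Z(B;12;(g₁,0,g₃))| = |Z(B;1;(g₁,g₃))|. -/

import Mathlib

/-- A permutation of arbitrary length: a length `n` together with a
bijection of `Fin n` (0-indexed positions and values). -/
abbrev PermAny : Type := Σ n : ℕ, Equiv.Perm (Fin n)

/-- `β` is contained as a pattern in `π`. -/
def ContainsPat {k n : ℕ} (β : Equiv.Perm (Fin k)) (π : Equiv.Perm (Fin n)) : Prop :=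
  ∃ f : Fin k → Fin n, StrictMono f ∧ ∀ a b : Fin k, β a < β b ↔ π (f a) < π (f b)

/-- `Av(B)`: the permutations avoiding every member of `B`. -/
def AvSet (B : Set PermAny) : Set PermAny :=
  {p | ∀ b ∈ B, ¬ ContainsPat b.2 p.2}

/-- A permutation class: closed downwards under pattern containment. -/
def IsPermClass (C : Set PermAny) : Prop :=
  ∀ p ∈ C, ∀ q : PermAny, ContainsPat q.2 p.2 → q ∈ C

/-- The positions `a,…,b` form an interval of `π`: the corresponding values
form a set of consecutive integers. -/
def IsIntervalAt {n : ℕ} (π : Equiv.Perm (Fin n)) (a b : Fin n) : Prop :=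
  a ≤ b ∧ ∃ c : ℕ,
    (Finset.Icc a b).image (fun i => (π i : ℕ)) = Finset.Icc c (c + ((b : ℕ) - (a : ℕ)))

/-- A permutation is simple when all of its intervals are trivial. -/
def IsSimplePerm {n : ℕ} (π : Equiv.Perm (Fin n)) : Prop :=
  ∀ a b : Fin n, IsIntervalAt π a b → a = b ∨ ((a : ℕ) = 0 ∧ (b : ℕ) = n - 1)

/-- `Z(B;π;g)`: the set of `B`-avoiding permutations of length `k + ‖g‖` whose
`k` smallest values occupy the positions prescribed by the gap vector `g`
and form the pattern `π`.  (0-indexed: entry `π r` sits at position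
`g 0 + ⋯ + g r + r`.) -/
def ZSet (B : Set PermAny) {k : ℕ} (π : Equiv.Perm (Fin k)) (g : Fin (k + 1) → ℕ) :
    Set (Equiv.Perm (Fin (k + ∑ j, g j))) :=
  {p | (⟨k + ∑ j, g j, p⟩ : PermAny) ∈ AvSet B ∧
    ∀ r : Fin k, ∀ i : Fin (k + ∑ j, g j),
      (i : ℕ) = (∑ j ∈ Finset.univ.filter fun j : Fin (k + 1) => (j : ℕ) ≤ (r : ℕ), g j)
          + (r : ℕ) →
      (p i : ℕ) = (π r : ℕ)}

/-- `J(π)`: the set of gap positions `j` such that `Z(B;π;g)` is empty whenever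
`g j > 0`. -/
def JSet (B : Set PermAny) {k : ℕ} (π : Equiv.Perm (Fin k)) : Set (Fin (k + 1)) :=
  {j | ∀ g : Fin (k + 1) → ℕ, 0 < g j → ZSet B π g = ∅}

/-- `d_r(π)`: delete the entry at position `r` from `π` and standardize. -/
def delEntry {k : ℕ} (π : Equiv.Perm (Fin (k + 1))) (r : Fin (k + 1)) : Equiv.Perm (Fin k) :=
  Equiv.removeNone ((finSuccEquiv' r).symm.trans (π.trans (finSuccEquiv' (π r))))

/-- `d_r(g)`: merge the gaps on either side of position `r`. -/
def delGap {k : ℕ} (g : Fin (k + 2) → ℕ) (r : Fin (k + 1)) : Fin (k + 1) → ℕ :=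
  fun j =>
    if (j : ℕ) < (r : ℕ) then g (Fin.castSucc j)
    else if (j : ℕ) = (r : ℕ) then g (Fin.castSucc j) + g j.succ
    else g j.succ

/-- The entry `π r` is ES-reducible for `π` with respect to `B`
(Zeilberger's original notion). -/
def ESRed (B : Set PermAny) {k : ℕ} (π : Equiv.Perm (Fin (k + 1))) (r : Fin (k + 1)) : Prop :=
  ∀ g : Fin (k + 2) → ℕ, (∀ j ∈ JSet B π, g j = 0) →
    (ZSet B π g).ncard = (ZSet B (delEntry π r) (delGap g r)).ncard

/-- The entry `π r` is ES⁺-reducible for `π` with respect to `B`. -/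
def ESPlusRed (B : Set PermAny) {k : ℕ} (π : Equiv.Perm (Fin (k + 1))) (r : Fin (k + 1)) : Prop :=
  ∀ g : Fin (k + 2) → ℕ, (ZSet B π g).Nonempty →
    (ZSet B π g).ncard = (ZSet B (delEntry π r) (delGap g r)).ncard

/-- `G_r(π)`: the largest lower order ideal of gap vectors `g` such that for all
`h ≤ g`, either `Z(B;π;h)` is nonempty or `Z(B;d_r(π);d_r(h))` is empty. -/
def GrSet (B : Set PermAny) {k : ℕ} (π : Equiv.Perm (Fin (k + 1))) (r : Fin (k + 1)) :
    Set (Fin (k + 2) → ℕ) :=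
  {g | ∀ h : Fin (k + 2) → ℕ, h ≤ g →
    (ZSet B π h).Nonempty ∨ ZSet B (delEntry π r) (delGap h r) = ∅}

noncomputable def p132 : Equiv.Perm (Fin 3) := Equiv.ofBijective ![0, 2, 1] (by decide)



def insEntry {k : ℕ} (q : Equiv.Perm (Fin k)) (r v : Fin (k + 1)) : Equiv.Perm (Fin (k + 1)) :=
  (finSuccEquiv' r).trans ((Equiv.optionCongr q).trans (finSuccEquiv' v).symm)

lemma insEntry_at {k} (q : Equiv.Perm (Fin k)) (r v) : insEntry q r v r = v := by
  simp [insEntry]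

lemma insEntry_succAbove {k} (q : Equiv.Perm (Fin k)) (r v) (i : Fin k) :
    insEntry q r v (r.succAbove i) = v.succAbove (q i) := by
  simp [insEntry, finSuccEquiv'_succAbove, finSuccEquiv'_symm_some]

lemma apply_succAbove {k} (p : Equiv.Perm (Fin (k+1))) (r : Fin (k+1)) (i : Fin k) :
    p (r.succAbove i) = (p r).succAbove (delEntry p r i) := by
  set E := (finSuccEquiv' r).symm.trans (p.trans (finSuccEquiv' (p r))) with hE
  have hne : p (r.succAbove i) ≠ p r := by
    simp [p.injective.ne_iff, Fin.succAbove_ne]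
  obtain ⟨j, hj⟩ := Fin.exists_succAbove_eq hne
  have hsome : E (some i) = some j := by
    simp [hE, finSuccEquiv'_symm_some, ← hj, finSuccEquiv'_succAbove]
  have h2 : E.removeNone i = j :=
    Option.some_injective _ ((Equiv.removeNone_some E ⟨j, hsome⟩).trans hsome)
  rw [delEntry, ← hE, h2, hj]

lemma delEntry_insEntry {k} (q : Equiv.Perm (Fin k)) (r v) :
    delEntry (insEntry q r v) r = q := by
  ext i
  have h1 := apply_succAbove (insEntry q r v) r i
  rw [insEntry_succAbove, insEntry_at] at h1
  exact congrArg Fin.val (Fin.succAbove_right_injective h1.symm)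

lemma insEntry_delEntry {k} (p : Equiv.Perm (Fin (k+1))) (r : Fin (k+1)) :
    insEntry (delEntry p r) r (p r) = p := by
  ext j
  rcases eq_or_ne j r with rfl | h
  · rw [insEntry_at]
  · obtain ⟨i, rfl⟩ := Fin.exists_succAbove_eq h
    rw [insEntry_succAbove, ← apply_succAbove]

lemma insEntry_injective {k} (r v : Fin (k+1)) : Function.Injective (fun q => insEntry q r v) := by
  intro a b h
  have := congrArg (fun p => delEntry p r) h
  simpa [delEntry_insEntry] using this

lemma containsPat_trans {a b c : ℕ} {x : Equiv.Perm (Fin a)} {y : Equiv.Perm (Fin b)}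
    {z : Equiv.Perm (Fin c)} (h1 : ContainsPat x y) (h2 : ContainsPat y z) :
    ContainsPat x z := by
  obtain ⟨f, hf, hfi⟩ := h1
  obtain ⟨g, hg, hgi⟩ := h2
  exact ⟨g ∘ f, hg.comp hf, fun i j => (hfi i j).trans (hgi (f i) (f j))⟩

lemma delEntry_containsPat {k} (p : Equiv.Perm (Fin (k+1))) (r : Fin (k+1)) :
    ContainsPat (delEntry p r) p := by
  refine ⟨r.succAbove, Fin.strictMono_succAbove r, fun a b => ?_⟩
  rw [apply_succAbove p r a, apply_succAbove p r b, Fin.succAbove_lt_succAbove_iff]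

lemma contains132_iff {n : ℕ} (p : Equiv.Perm (Fin n)) :
    ContainsPat p132 p ↔ ∃ i j l : Fin n, i < j ∧ j < l ∧ p i < p l ∧ p l < p j := by
  constructor
  · rintro ⟨f, hf, hfi⟩
    refine ⟨f 0, f 1, f 2, hf (by decide), hf (by decide), ?_, ?_⟩
    · exact (hfi 0 2).mp (by decide)
    · exact (hfi 2 1).mp (by decide)
  · rintro ⟨i, j, l, hij, hjl, h1, h2⟩
    refine ⟨![i, j, l], ?_, ?_⟩
    · intro a b hab
      fin_cases a <;> fin_cases b <;> simp_all <;> omega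
    · intro a b
      fin_cases a <;> fin_cases b <;>
        simp_all [p132, Equiv.ofBijective] <;> omega

section FRAG
lemma val_succAbove {n : ℕ} (p : Fin (n+1)) (i : Fin n) :
    (p.succAbove i : ℕ) = if (i:ℕ) < (p:ℕ) then (i:ℕ) else (i:ℕ)+1 := by
  rw [Fin.succAbove]
  rcases lt_or_ge (Fin.castSucc i) p with h | h
  · rw [if_pos h, if_pos (by simpa [Fin.lt_def] using h)]; rfl
  · rw [if_neg (not_lt.2 h), if_neg (by simpa [Fin.lt_def, Fin.le_def, not_lt] using h)]; rfl

lemma mem_ZSet2 (g : Fin 3 → ℕ) (p : Equiv.Perm (Fin (2 + ∑ j, g j))) :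
    p ∈ ZSet ({⟨3, p132⟩} : Set PermAny) (1 : Equiv.Perm (Fin 2)) g ↔
      (¬ ContainsPat p132 p ∧
       (∀ i : Fin (2 + ∑ j, g j), (i:ℕ) = g 0 → (p i : ℕ) = 0) ∧
       (∀ i : Fin (2 + ∑ j, g j), (i:ℕ) = g 0 + g 1 + 1 → (p i : ℕ) = 1)) := by
  have h0 : (Finset.univ.filter fun j : Fin 3 => (j:ℕ) ≤ ((0 : Fin 2):ℕ)) = {0} := by decide
  have h1 : (Finset.univ.filter fun j : Fin 3 => (j:ℕ) ≤ ((1 : Fin 2):ℕ)) = {0, 1} := by decide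
  have hp2 : ∑ j ∈ ({0, 1} : Finset (Fin 3)), g j = g 0 + g 1 :=
    Finset.sum_pair (by decide)
  simp only [ZSet, Set.mem_setOf_eq, AvSet, Set.mem_singleton_iff, forall_eq,
    Fin.forall_fin_two, h0, h1, Finset.sum_singleton, hp2,
    Equiv.Perm.one_apply]
  constructor
  · rintro ⟨hav, hc0, hc1⟩
    exact ⟨hav, fun i hi => hc0 i (by simpa using hi), fun i hi => hc1 i (by simpa using hi)⟩
  · rintro ⟨hav, hc0, hc1⟩
    exact ⟨hav, fun i hi => hc0 i (by simpa using hi), fun i hi => hc1 i (by simpa using hi)⟩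

lemma mem_ZSet1 (g : Fin 2 → ℕ) (p : Equiv.Perm (Fin (1 + ∑ j, g j))) :
    p ∈ ZSet ({⟨3, p132⟩} : Set PermAny) (1 : Equiv.Perm (Fin 1)) g ↔
      (¬ ContainsPat p132 p ∧
       (∀ i : Fin (1 + ∑ j, g j), (i:ℕ) = g 0 → (p i : ℕ) = 0)) := by
  have h0 : (Finset.univ.filter fun j : Fin 2 => (j:ℕ) ≤ ((0 : Fin 1):ℕ)) = {0} := by decide
  simp only [ZSet, Set.mem_setOf_eq, AvSet, Set.mem_singleton_iff, forall_eq,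
    Fin.forall_fin_one, h0, Finset.sum_singleton, Equiv.Perm.one_apply]
  constructor
  · rintro ⟨hav, hc0⟩
    exact ⟨hav, fun i hi => hc0 i (by simpa using hi)⟩
  · rintro ⟨hav, hc0⟩
    exact ⟨hav, fun i hi => hc0 i (by simpa using hi)⟩

example : (∀ g : Fin 3 → ℕ, 0 < g 1 →
      ZSet ({⟨3, p132⟩} : Set PermAny) (1 : Equiv.Perm (Fin 2)) g = ∅) := by
  intro g hg
  rw [Set.eq_empty_iff_forall_notMem]
  intro p hp
  rw [mem_ZSet2] at hp
  obtain ⟨hav, h0, h1⟩ := hp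
  have hsum : (∑ j : Fin (2+1), g j) = g 0 + g 1 + g 2 := by
    show (∑ j : Fin 3, g j) = _
    rw [Fin.sum_univ_three]
  have hsum3 : (∑ j : Fin 3, g j) = g 0 + g 1 + g 2 := hsum
  refine hav ?_
  rw [contains132_iff]
  refine ⟨⟨g 0, by omega⟩, ⟨g 0 + 1, by omega⟩, ⟨g 0 + g 1 + 1, by omega⟩,
    by simp [Fin.lt_def], by simp [Fin.lt_def]; omega, ?_, ?_⟩
  · have e0 : (p ⟨g 0, by omega⟩ : ℕ) = 0 := h0 _ rfl
    have e1 : (p ⟨g 0 + g 1 + 1, by omega⟩ : ℕ) = 1 := h1 _ rfl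
    rw [Fin.lt_def, e0, e1]; omega
  · have e1 : (p ⟨g 0 + g 1 + 1, by omega⟩ : ℕ) = 1 := h1 _ rfl
    have ne0 : p ⟨g 0 + 1, by omega⟩ ≠ p ⟨g 0, by omega⟩ :=
      fun h => by have := p.injective h; simp [Fin.ext_iff] at this
    have ne1 : p ⟨g 0 + 1, by omega⟩ ≠ p ⟨g 0 + g 1 + 1, by omega⟩ :=
      fun h => by have := p.injective h; simp [Fin.ext_iff] at this; omega
    have e0 : (p ⟨g 0, by omega⟩ : ℕ) = 0 := h0 _ rfl
    rw [Fin.lt_def, e1]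
    rw [Ne, Fin.ext_iff] at ne0 ne1
    omega
end FRAG

section FRAG3
lemma containsPat_permCongr_finCongr {k n n' : ℕ} (h : n = n') (β : Equiv.Perm (Fin k))
    (p : Equiv.Perm (Fin n)) :
    ContainsPat β ((finCongr h).permCongr p) ↔ ContainsPat β p := by
  subst h
  have : (finCongr rfl).permCongr p = p := by
    ext x
    simp [Equiv.permCongr_apply]
  rw [this]

lemma insEntry_avoids {m g₁ : ℕ} (hm : g₁ < m) (hr1 : g₁ + 1 < m + 1) (hv1 : 1 < m + 1)
    (q : Equiv.Perm (Fin m))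
    (hq : ¬ ContainsPat p132 q) (h0 : (q ⟨g₁, hm⟩ : ℕ) = 0) :
    ¬ ContainsPat p132 (insEntry q ⟨g₁ + 1, hr1⟩ ⟨1, hv1⟩) := by
  intro hc
  rw [contains132_iff] at hc
  obtain ⟨i, j, l, hij, hjl, h1, h2⟩ := hc
  rw [Fin.lt_def] at hij hjl h1 h2
  have hvv : ((⟨1, hv1⟩ : Fin (m+1)) : ℕ) = 1 := rfl
  have hrv : ((⟨g₁ + 1, hr1⟩ : Fin (m+1)) : ℕ) = g₁ + 1 := rfl
  have key : ∀ x : Fin (m+1), (x : ℕ) ≠ g₁ + 1 → ∃ x' : Fin m,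
      (((x' : ℕ) < g₁ + 1 ∧ (x : ℕ) = (x' : ℕ)) ∨
        (g₁ + 1 ≤ (x' : ℕ) ∧ (x : ℕ) = (x' : ℕ) + 1)) ∧
      (((q x' : ℕ) = 0 ∧ ((insEntry q ⟨g₁+1, hr1⟩ ⟨1, hv1⟩) x : ℕ) = 0) ∨
        (1 ≤ (q x' : ℕ) ∧
          ((insEntry q ⟨g₁+1, hr1⟩ ⟨1, hv1⟩) x : ℕ) = (q x' : ℕ) + 1)) := by
    intro x hx
    obtain ⟨x', hx'⟩ :=
      Fin.exists_succAbove_eq (fun h : x = ⟨g₁+1, hr1⟩ => hx (by rw [h]))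
    have hpos := congrArg Fin.val hx'
    rw [val_succAbove, hrv] at hpos
    refine ⟨x', by split_ifs at hpos <;> omega, ?_⟩
    rw [← hx', insEntry_succAbove, val_succAbove, hvv]
    split_ifs <;> omega
  have hP_at : ∀ x : Fin (m+1), (x : ℕ) = g₁ + 1 →
      ((insEntry q ⟨g₁+1, hr1⟩ ⟨1, hv1⟩) x : ℕ) = 1 := by
    intro x hx
    have hxx : x = ⟨g₁+1, hr1⟩ := Fin.ext hx
    rw [hxx, insEntry_at]
  by_cases hi : (i : ℕ) = g₁ + 1
  · have hPi := hP_at i hi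
    obtain ⟨j', hjp, hjv⟩ := key j (by omega)
    obtain ⟨l', hlp, hlv⟩ := key l (by omega)
    refine hq ((contains132_iff q).mpr ⟨⟨g₁, hm⟩, j', l', ?_, ?_, ?_, ?_⟩) <;>
      simp only [Fin.lt_def] <;> omega
  by_cases hj : (j : ℕ) = g₁ + 1
  · have hPj := hP_at j hj
    obtain ⟨i', hip, hiv⟩ := key i hi
    obtain ⟨l', hlp, hlv⟩ := key l (by omega)
    omega
  by_cases hl : (l : ℕ) = g₁ + 1
  · have hPl := hP_at l hl
    obtain ⟨i', hip, hiv⟩ := key i hi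
    obtain ⟨j', hjp, hjv⟩ := key j hj
    have hqi : (q i' : ℕ) = 0 := by omega
    have hieq : i' = ⟨g₁, hm⟩ := q.injective (Fin.ext (by rw [hqi, h0]))
    have hival : (i' : ℕ) = g₁ := by rw [hieq]
    omega
  · obtain ⟨i', hip, hiv⟩ := key i hi
    obtain ⟨j', hjp, hjv⟩ := key j hj
    obtain ⟨l', hlp, hlv⟩ := key l hl
    refine hq ((contains132_iff q).mpr ⟨i', j', l', ?_, ?_, ?_, ?_⟩) <;>
      simp only [Fin.lt_def] <;> omega
end FRAG3

section FRAG4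
lemma card_aux {M m g₁ : ℕ} (hM : M = m + 1) (hm : g₁ < m)
    {S : Set (Equiv.Perm (Fin M))} {T : Set (Equiv.Perm (Fin m))}
    (hS : ∀ p : Equiv.Perm (Fin M), p ∈ S ↔ (¬ ContainsPat p132 p ∧
      (∀ i : Fin M, (i:ℕ) = g₁ → (p i : ℕ) = 0) ∧
      (∀ i : Fin M, (i:ℕ) = g₁ + 1 → (p i : ℕ) = 1)))
    (hT : ∀ p : Equiv.Perm (Fin m), p ∈ T ↔ (¬ ContainsPat p132 p ∧
      (∀ i : Fin m, (i:ℕ) = g₁ → (p i : ℕ) = 0))) :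
    S.ncard = T.ncard := by
  subst hM
  have hr1 : g₁ + 1 < m + 1 := by omega
  have hv1 : 1 < m + 1 := by omega
  have hvval : ((⟨1, hv1⟩ : Fin (m+1)) : ℕ) = 1 := rfl
  have hrval : ((⟨g₁ + 1, hr1⟩ : Fin (m+1)) : ℕ) = g₁ + 1 := rfl
  have hSimg : S = (fun q => insEntry q ⟨g₁+1, hr1⟩ ⟨1, hv1⟩) '' T := by
    ext p
    simp only [Set.mem_image]
    constructor
    · intro hp
      rw [hS] at hp
      obtain ⟨hav, h0, h1⟩ := hp
      have hpr : p ⟨g₁+1, hr1⟩ = ⟨1, hv1⟩ := Fin.ext (h1 _ rfl)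
      refine ⟨delEntry p ⟨g₁+1, hr1⟩, ?_, ?_⟩
      · rw [hT]
        refine ⟨fun hcon => hav (containsPat_trans hcon (delEntry_containsPat p _)), ?_⟩
        intro i hi
        have happ := apply_succAbove p ⟨g₁+1, hr1⟩ i
        have hLpos : (((⟨g₁+1, hr1⟩ : Fin (m+1)).succAbove i) : ℕ) = g₁ := by
          rw [val_succAbove, hi, hrval]
          simp
        have hL : (p ((⟨g₁+1, hr1⟩ : Fin (m+1)).succAbove i) : ℕ) = 0 := h0 _ hLpos
        rw [happ, hpr, val_succAbove, hvval] at hL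
        split_ifs at hL <;> omega
      · rw [← hpr]
        exact insEntry_delEntry p _
    · rintro ⟨q, hqT, rfl⟩
      rw [hT] at hqT
      obtain ⟨hav, h0⟩ := hqT
      have h0' : (q ⟨g₁, hm⟩ : ℕ) = 0 := h0 _ rfl
      rw [hS]
      refine ⟨insEntry_avoids hm hr1 hv1 q hav h0', ?_, ?_⟩
      · intro i hi
        have hieq : i = (⟨g₁+1, hr1⟩ : Fin (m+1)).succAbove ⟨g₁, hm⟩ := by
          apply Fin.ext
          rw [val_succAbove, hi, hrval]
          simp
        rw [hieq, insEntry_succAbove, val_succAbove, h0', hvval]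
        simp
      · intro i hi
        have hieq : i = ⟨g₁+1, hr1⟩ := Fin.ext hi
        rw [hieq, insEntry_at]
  rw [hSimg, Set.ncard_image_of_injective _ (insEntry_injective _ _)]
end FRAG4

/-- For `B = {132}`:
(i) `Z(B;12;(g₁,g₂,g₃)) = ∅` whenever `g₂ > 0`; and
(ii) `|Z(B;12;(g₁,0,g₃))| = |Z(B;1;(g₁,g₃))|` for all `g₁, g₃`. -/
theorem ZSet_12_for_132 :
    (∀ g : Fin 3 → ℕ, 0 < g 1 →
      ZSet ({⟨3, p132⟩} : Set PermAny) (1 : Equiv.Perm (Fin 2)) g = ∅) ∧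
    (∀ g₁ g₃ : ℕ,
      (ZSet ({⟨3, p132⟩} : Set PermAny) (1 : Equiv.Perm (Fin 2)) ![g₁, 0, g₃]).ncard =
      (ZSet ({⟨3, p132⟩} : Set PermAny) (1 : Equiv.Perm (Fin 1)) ![g₁, g₃]).ncard) := by
  constructor
  · intro g hg
    rw [Set.eq_empty_iff_forall_notMem]
    intro p hp
    rw [mem_ZSet2] at hp
    obtain ⟨hav, h0, h1⟩ := hp
    have hsum : (∑ j : Fin (2+1), g j) = g 0 + g 1 + g 2 := by
      show (∑ j : Fin 3, g j) = _
      rw [Fin.sum_univ_three]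
    have hsum3 : (∑ j : Fin 3, g j) = g 0 + g 1 + g 2 := hsum
    refine hav ?_
    rw [contains132_iff]
    refine ⟨⟨g 0, by omega⟩, ⟨g 0 + 1, by omega⟩, ⟨g 0 + g 1 + 1, by omega⟩,
      by simp [Fin.lt_def], by simp [Fin.lt_def]; omega, ?_, ?_⟩
    · have e0 : (p ⟨g 0, by omega⟩ : ℕ) = 0 := h0 _ rfl
      have e1 : (p ⟨g 0 + g 1 + 1, by omega⟩ : ℕ) = 1 := h1 _ rfl
      rw [Fin.lt_def, e0, e1]; omega
    · have e1 : (p ⟨g 0 + g 1 + 1, by omega⟩ : ℕ) = 1 := h1 _ rfl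
      have ne0 : p ⟨g 0 + 1, by omega⟩ ≠ p ⟨g 0, by omega⟩ :=
        fun h => by have := p.injective h; simp [Fin.ext_iff] at this
      have ne1 : p ⟨g 0 + 1, by omega⟩ ≠ p ⟨g 0 + g 1 + 1, by omega⟩ :=
        fun h => by have := p.injective h; simp [Fin.ext_iff] at this; omega
      have e0 : (p ⟨g 0, by omega⟩ : ℕ) = 0 := h0 _ rfl
      rw [Fin.lt_def, e1]
      rw [Ne, Fin.ext_iff] at ne0 ne1
      omega
  · intro g₁ g₃
    have hs2 : (∑ j : Fin (2+1), (![g₁, 0, g₃] : Fin 3 → ℕ) j) = g₁ + 0 + g₃ := by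
      show (∑ j : Fin 3, (![g₁, 0, g₃] : Fin 3 → ℕ) j) = _
      rw [Fin.sum_univ_three]; simp
    have hs1 : (∑ j : Fin (1+1), (![g₁, g₃] : Fin 2 → ℕ) j) = g₁ + g₃ := by
      show (∑ j : Fin 2, (![g₁, g₃] : Fin 2 → ℕ) j) = _
      rw [Fin.sum_univ_two]; simp
    have hs2' : (∑ j : Fin 3, (![g₁, 0, g₃] : Fin 3 → ℕ) j) = g₁ + 0 + g₃ := hs2
    have hs1' : (∑ j : Fin 2, (![g₁, g₃] : Fin 2 → ℕ) j) = g₁ + g₃ := hs1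
    refine card_aux (g₁ := g₁) (by omega) (by omega) ?_ ?_
    · intro p
      rw [mem_ZSet2]
      constructor
      · rintro ⟨a, b, c⟩
        exact ⟨a, fun i hi => b i (by simpa using hi),
          fun i hi => c i (by simp; omega)⟩
      · rintro ⟨a, b, c⟩
        exact ⟨a, fun i hi => b i (by simpa using hi),
          fun i hi => c i (by simp at hi; omega)⟩
    · intro p
      rw [mem_ZSet1]
      constructor
      · rintro ⟨a, b⟩
        exact ⟨a, fun i hi => b i (by simpa using hi)⟩
      · rintro ⟨a, b⟩
        exact ⟨a, fun i hi => b i (by simpa using hi)⟩
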